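/- Let k > d(Δ+1) and let ᾱ be a root of f mod p^k with l := v_p(α_i − ᾱ) > Δ + 1 for some i. Then every β̄ ∈ ℤ_p with β̄ ≡ ᾱ mod p^l is also a root of f mod p^k. -/

import Mathlib

open Polynomial

noncomputable def padicEmb (p : ℕ) [Fact p.Prime] : ℤ_[p] →+* AlgebraicClosure ℚ_[p] :=
  (algebraMap ℚ_[p] (AlgebraicClosure ℚ_[p])).comp (PadicInt.Coe.ringHom)

/-- The discriminant `D(h) = h_m^{2m-1} · ∏_{i<j} (r_i - r_j)^2`, computed from the
roots `r_i` of `h` in the algebraic closure of `ℚ_p`. -/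
noncomputable def padicDisc (p : ℕ) [Fact p.Prime] (h : Polynomial ℤ_[p]) :
    AlgebraicClosure ℚ_[p] :=
  let l := (h.map (padicEmb p)).roots.toList
  (padicEmb p h.leadingCoeff) ^ (2 * h.natDegree - 1) *
    ∏ ij ∈ (Finset.range l.length ×ˢ Finset.range l.length).filter (fun ij => ij.1 < ij.2),
      (l.getD ij.1 0 - l.getD ij.2 0) ^ 2

section Aux

variable {p : ℕ} [Fact p.Prime]

lemma padicEmb_injective : Function.Injective (padicEmb p) := by
  have h1 : Function.Injective (PadicInt.Coe.ringHom (p := p)) :=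
    fun a b hab => Subtype.coe_injective hab
  exact (algebraMap ℚ_[p] (AlgebraicClosure ℚ_[p])).injective.comp h1

lemma norm_le_of_dvd {x y : ℤ_[p]} (h : x ∣ y) : ‖y‖ ≤ ‖x‖ := by
  rcases h with ⟨z, rfl⟩
  rw [norm_mul]
  exact mul_le_of_le_one_right (norm_nonneg x) (PadicInt.norm_le_one z)

lemma norm_sub_eq_left {a b : ℤ_[p]} (h : ‖b‖ < ‖a‖) : ‖a - b‖ = ‖a‖ := by
  apply le_antisymm
  · have h1 := PadicInt.nonarchimedean a (-b)
    rw [← sub_eq_add_neg, norm_neg] at h1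
    exact h1.trans (max_le le_rfl h.le)
  · have h2 := PadicInt.nonarchimedean (a - b) b
    rw [sub_add_cancel] at h2
    by_contra hc
    push_neg at hc
    exact absurd (h2.trans_lt (max_lt hc h)) (lt_irrefl _)

/-- `‖·‖ : ℤ_[p] →* ℝ` as a monoid hom. -/
noncomputable def padicNormHom : ℤ_[p] →* ℝ where
  toFun := fun x => ‖x‖
  map_one' := norm_one
  map_mul' := norm_mul

/-- The key discriminant estimate: if `D` maps to `padicDisc p h` and is nonzero then
`‖D‖ ≤ ‖h'(a)‖` for every root `a` of `h` in `ℤ_[p]`. -/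
theorem norm_disc_le_norm_deriv (h : Polynomial ℤ_[p]) (hh0 : h ≠ 0)
    (a : ℤ_[p]) (ha : h.eval a = 0) (D : ℤ_[p])
    (hD : padicEmb p D = padicDisc p h) (hD0 : D ≠ 0) :
    ‖D‖ ≤ ‖h.derivative.eval a‖ := by
  classical
  set emb := padicEmb p with hembdef
  have embInj : Function.Injective emb := padicEmb_injective
  set hbar : Polynomial (AlgebraicClosure ℚ_[p]) := h.map emb with hhatdef
  have hhat0 : hbar ≠ 0 := (Polynomial.map_ne_zero_iff embInj).mpr hh0
  set N := h.natDegree with hNdef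
  have hdeg : hbar.natDegree = N := natDegree_map_eq_of_injective embInj h
  have hsplits : hbar.Splits := IsAlgClosed.splits hbar
  have hcard : Multiset.card hbar.roots = N := by
    rw [splits_iff_card_roots.mp hsplits, hdeg]
  have hrootmem : emb a ∈ hbar.roots := by
    rw [mem_roots hhat0]
    show hbar.eval (emb a) = 0
    rw [hhatdef, eval_map, eval₂_at_apply, ha, map_zero]
  have hN1 : 1 ≤ N := by
    by_contra hn
    have h0 : h.natDegree = 0 := by rw [← hNdef]; omega
    have hc : h = C (h.coeff 0) := Polynomial.eq_C_of_natDegree_eq_zero h0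
    rw [hc, eval_C] at ha
    rw [hc, ha, map_zero] at hh0
    exact hh0 rfl
  set L := hbar.roots.toList with hLdef
  have hLlen : L.length = N := by rw [hLdef, Multiset.length_toList, hcard]
  have hLcoe : (L : Multiset (AlgebraicClosure ℚ_[p])) = hbar.roots := Multiset.coe_toList _
  set cbar : AlgebraicClosure ℚ_[p] := emb h.leadingCoeff with hcdef
  have hc0 : cbar ≠ 0 := by
    rw [hcdef]
    intro hc
    exact hh0 (leadingCoeff_eq_zero.mp (embInj (by rw [hc, map_zero])))
  set F : ℕ × ℕ → AlgebraicClosure ℚ_[p] := fun ij => L.getD ij.1 0 - L.getD ij.2 0 with hFdef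
  set idxP := Finset.range L.length ×ˢ Finset.range L.length with hidxP
  set T₁ := idxP.filter (fun ij => ij.1 < ij.2) with hT1
  set T₂ := idxP.filter (fun ij => ij.2 < ij.1) with hT2
  set Tne := idxP.filter (fun ij => ij.1 ≠ ij.2) with hTne
  have hdisc : padicDisc p h = cbar ^ (2 * N - 1) * ∏ ij ∈ T₁, F ij ^ 2 := rfl
  -- nodup
  have hnodup : L.Nodup := by
    by_contra hnd
    have main : ∀ (x y : Fin L.length), L.get x = L.get y → x.1 < y.1 → False := by
      intro x y hxy hlt
      have hmem : ((x.1 : ℕ), (y.1 : ℕ)) ∈ T₁ := by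
        rw [hT1, hidxP]
        simp only [Finset.mem_filter, Finset.mem_product, Finset.mem_range]
        exact ⟨⟨x.2, y.2⟩, hlt⟩
      have hzero : F (x.1, y.1) = 0 := by
        rw [hFdef]
        simp only
        rw [List.getD_eq_getElem _ _ x.2, List.getD_eq_getElem _ _ y.2,
          ← List.get_eq_getElem, ← List.get_eq_getElem, hxy, sub_self]
      have hd0 : padicDisc p h = 0 := by
        rw [hdisc, Finset.prod_eq_zero hmem (by rw [hzero]; ring), mul_zero]
      rw [hd0] at hD
      exact hD0 (embInj (by rw [hD, map_zero]))
    rw [List.nodup_iff_injective_get] at hnd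
    simp only [Function.Injective, not_forall] at hnd
    obtain ⟨x, y, hxy, hne⟩ := hnd
    rcases lt_trichotomy x.1 y.1 with hlt | heq | hgt
    · exact main x y hxy hlt
    · exact hne (Fin.ext heq)
    · exact main y x hxy.symm hgt
  have hRnodup : hbar.roots.Nodup := by rw [← hLcoe]; exact Multiset.coe_nodup.mpr hnodup
  set RF : Finset (AlgebraicClosure ℚ_[p]) := ⟨hbar.roots, hRnodup⟩ with hRFdef
  have hRFcard : RF.card = N := hcard
  have hmemRF : ∀ x, x ∈ RF ↔ x ∈ hbar.roots := fun x => Iff.rfl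
  -- splitting as Finset product
  have hsplitF : hbar = C cbar * ∏ x ∈ RF, (X - C x) := by
    have h1 := hsplits.eq_prod_roots
    have h2 : hbar.leadingCoeff = cbar := by
      rw [hhatdef, hcdef]; exact leadingCoeff_map_of_injective embInj h
    rw [h2] at h1
    rw [h1, Finset.prod_eq_multiset_prod]
  -- derivative at roots
  have hder : ∀ x ∈ RF, hbar.derivative.eval x = cbar * ∏ y ∈ RF.erase x, (x - y) := by
    intro x hx
    have hsp2 : hbar = (X - C x) * (C cbar * ∏ y ∈ RF.erase x, (X - C y)) := by
      rw [hsplitF, ← Finset.mul_prod_erase RF _ hx]; ring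
    rw [hsp2, derivative_mul, derivative_X_sub_C, one_mul]
    simp [eval_prod]
  -- aK
  have haKRF : emb a ∈ RF := hrootmem
  have hθemb : emb (h.derivative.eval a) = cbar * ∏ y ∈ RF.erase (emb a), (emb a - y) := by
    have h1 : hbar.derivative.eval (emb a) = emb (h.derivative.eval a) := by
      rw [hhatdef, derivative_map, eval_map, eval₂_at_apply]
    rw [← h1]
    exact hder (emb a) haKRF
  -- sign computation
  have s1 : Tne = T₁ ∪ T₂ := by
    rw [hTne, hT1, hT2, ← Finset.filter_or]
    exact Finset.filter_congr fun x _ => by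
      simp only [ne_eq, decide_eq_true_eq]
      constructor
      · exact fun hne => lt_or_gt_of_ne hne
      · rintro (h | h) <;> omega
  have s2 : Disjoint T₁ T₂ := by
    rw [Finset.disjoint_left]
    intro ij h1 h2
    rw [hT1, Finset.mem_filter] at h1
    rw [hT2, Finset.mem_filter] at h2
    omega
  have s3 : ∏ ij ∈ Tne, F ij = (∏ ij ∈ T₁, F ij) * ∏ ij ∈ T₂, F ij := by
    rw [s1, Finset.prod_union s2]
  have s4 : ∏ ij ∈ T₂, F ij = (-1) ^ T₁.card * ∏ ij ∈ T₁, F ij := by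
    have hb : ∏ ij ∈ T₂, F ij = ∏ ij ∈ T₁, (- F ij) := by
      refine Finset.prod_nbij' Prod.swap Prod.swap ?_ ?_ ?_ ?_ ?_
      · intro ij hij
        rw [hT2, Finset.mem_filter] at hij
        rw [hT1, Finset.mem_filter]
        refine ⟨?_, hij.2⟩
        rw [hidxP] at hij ⊢
        rw [Finset.mem_product] at hij ⊢
        exact ⟨hij.1.2, hij.1.1⟩
      · intro ij hij
        rw [hT1, Finset.mem_filter] at hij
        rw [hT2, Finset.mem_filter]
        refine ⟨?_, hij.2⟩
        rw [hidxP] at hij ⊢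
        rw [Finset.mem_product] at hij ⊢
        exact ⟨hij.1.2, hij.1.1⟩
      · intro ij _; rfl
      · intro ij _; rfl
      · intro ij _
        rw [hFdef]
        simp only [Prod.fst_swap, Prod.snd_swap]
        ring
    rw [hb]
    rw [show (fun ij => - F ij) = fun ij => (-1) * F ij from funext fun ij => by ring]
    rw [Finset.prod_mul_distrib, Finset.prod_const]
  have s6 : ∏ ij ∈ T₁, F ij ^ 2 = (-1) ^ T₁.card * ∏ ij ∈ Tne, F ij := by
    rw [Finset.prod_pow, s3, s4]
    have hcc : ((-1 : AlgebraicClosure ℚ_[p]) ^ T₁.card) * (-1) ^ T₁.card = 1 := by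
      rw [← mul_pow]; norm_num
    calc (∏ ij ∈ T₁, F ij) ^ 2
        = ((-1) ^ T₁.card * (-1) ^ T₁.card) * ((∏ ij ∈ T₁, F ij) * ∏ ij ∈ T₁, F ij) := by
          rw [hcc, one_mul, sq]
      _ = _ := by ring
  -- index product to Finset product
  have hgetmem : ∀ {b : ℕ}, b < L.length → L.getD b 0 ∈ RF := by
    intro b hb
    rw [hmemRF, ← hLcoe, List.getD_eq_getElem _ _ hb]
    exact_mod_cast List.getElem_mem hb
  have hgetinj : ∀ {b b' : ℕ}, b < L.length → b' < L.length → L.getD b 0 = L.getD b' 0 → b = b' := by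
    intro b b' hb hb' heq
    rw [List.getD_eq_getElem _ _ hb, List.getD_eq_getElem _ _ hb'] at heq
    have := List.nodup_iff_injective_get.mp hnodup
      (a₁ := ⟨b, hb⟩) (a₂ := ⟨b', hb'⟩) (by rw [List.get_eq_getElem, List.get_eq_getElem]; exact heq)
    exact congrArg Fin.val this
  have hidxOf : ∀ {b : ℕ}, b < L.length → L.idxOf (L.getD b 0) = b := by
    intro b hb
    have hmem : L.getD b 0 ∈ L := by
      rw [List.getD_eq_getElem _ _ hb]; exact List.getElem_mem hb
    refine hgetinj (List.idxOf_lt_length_iff.mpr hmem) hb ?_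
    rw [List.getD_eq_getElem _ _ (List.idxOf_lt_length_iff.mpr hmem)]
    exact List.getElem_idxOf _
  have s7 : ∏ ij ∈ Tne, F ij = ∏ xy ∈ RF.offDiag, (xy.1 - xy.2) := by
    refine Finset.prod_nbij' (fun ij => (L.getD ij.1 0, L.getD ij.2 0))
      (fun xy => (L.idxOf xy.1, L.idxOf xy.2)) ?_ ?_ ?_ ?_ ?_
    · intro ij hij
      rw [hTne, Finset.mem_filter, hidxP, Finset.mem_product, Finset.mem_range, Finset.mem_range] at hij
      rw [Finset.mem_offDiag]
      exact ⟨hgetmem hij.1.1, hgetmem hij.1.2, fun hc => hij.2 (hgetinj hij.1.1 hij.1.2 hc)⟩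
    · intro xy hxy
      rw [Finset.mem_offDiag] at hxy
      have h1 : xy.1 ∈ L := by rw [← Multiset.mem_coe, hLcoe]; exact hxy.1
      have h2 : xy.2 ∈ L := by rw [← Multiset.mem_coe, hLcoe]; exact hxy.2.1
      simp only [hTne, Finset.mem_filter, hidxP, Finset.mem_product, Finset.mem_range]
      refine ⟨⟨List.idxOf_lt_length_iff.mpr h1, List.idxOf_lt_length_iff.mpr h2⟩, ?_⟩
      intro hc
      apply hxy.2.2
      have e1 : L.getD (L.idxOf xy.1) 0 = xy.1 := by
        rw [List.getD_eq_getElem _ _ (List.idxOf_lt_length_iff.mpr h1)]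
        exact List.getElem_idxOf _
      have e2 : L.getD (L.idxOf xy.2) 0 = xy.2 := by
        rw [List.getD_eq_getElem _ _ (List.idxOf_lt_length_iff.mpr h2)]
        exact List.getElem_idxOf _
      rw [← e1, ← e2, hc]
    · intro ij hij
      rw [hTne, Finset.mem_filter, hidxP, Finset.mem_product, Finset.mem_range, Finset.mem_range] at hij
      exact Prod.ext (hidxOf hij.1.1) (hidxOf hij.1.2)
    · intro xy hxy
      rw [Finset.mem_offDiag] at hxy
      have h1 : xy.1 ∈ L := by rw [← Multiset.mem_coe, hLcoe]; exact hxy.1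
      have h2 : xy.2 ∈ L := by rw [← Multiset.mem_coe, hLcoe]; exact hxy.2.1
      have e1 : L.getD (L.idxOf xy.1) 0 = xy.1 := by
        rw [List.getD_eq_getElem _ _ (List.idxOf_lt_length_iff.mpr h1)]
        exact List.getElem_idxOf _
      have e2 : L.getD (L.idxOf xy.2) 0 = xy.2 := by
        rw [List.getD_eq_getElem _ _ (List.idxOf_lt_length_iff.mpr h2)]
        exact List.getElem_idxOf _
      exact Prod.ext e1 e2
    · intro ij _; rfl
  have s8 : ∏ xy ∈ RF.offDiag, (xy.1 - xy.2) = ∏ x ∈ RF, ∏ y ∈ RF.erase x, (x - y) := by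
    have hoff : RF.offDiag = (RF ×ˢ RF).filter (fun xy => xy.1 ≠ xy.2) := by
      ext xy; simp [Finset.mem_offDiag, Finset.mem_filter, Finset.mem_product, and_assoc]
    rw [hoff, Finset.prod_filter, Finset.prod_product]
    refine Finset.prod_congr rfl fun x _ => ?_
    rw [← Finset.prod_filter, Finset.filter_ne]
  -- valuation setup
  obtain ⟨O, hOmem, hOloc⟩ := IsLocalRing.exists_factor_valuationRing emb
  set v := O.valuation with hvdef
  have va : ∀ z : ℤ_[p], v (emb z) ≤ 1 := fun z => (O.valuation_le_one_iff _).mpr (hOmem z)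
  set W : AlgebraicClosure ℚ_[p] → _ := fun x => max (v x) 1 with hWdef
  have hW1 : ∀ x, (1 : O.ValueGroup) ≤ W x := fun x => le_max_right _ _
  -- Gauss claim
  set S := RF.filter (fun x => 1 < v x) with hSdef
  have hSsub : S ⊆ RF := Finset.filter_subset _ _
  have hj : S.card ≤ N := by rw [← hRFcard]; exact Finset.card_filter_le _ _
  have hSmem : S ∈ Finset.powersetCard S.card RF := Finset.mem_powersetCard.mpr ⟨hSsub, rfl⟩
  have hS0 : ∀ x ∈ S, v x ≠ 0 := by
    intro x hx h0
    rw [hSdef, Finset.mem_filter] at hx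
    rw [h0] at hx
    exact absurd hx.2 (by simp)
  have hlcK : hbar.leadingCoeff = cbar := by
    rw [hhatdef, hcdef]; exact leadingCoeff_map_of_injective embInj h
  have hcoeffv : v (cbar * hbar.roots.esymm S.card) ≤ 1 := by
    have hco := Polynomial.coeff_eq_esymm_roots_of_card
      (p := hbar) (by rw [hcard, hdeg]) (k := N - S.card) (by rw [hdeg]; omega)
    rw [hdeg, Nat.sub_sub_self hj, hlcK] at hco
    have hco2 : cbar * hbar.roots.esymm S.card = (-1) ^ S.card * hbar.coeff (N - S.card) := by
      rw [hco, show ∀ A B : AlgebraicClosure ℚ_[p],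
        (-1 : AlgebraicClosure ℚ_[p]) ^ S.card * (A * (-1) ^ S.card * B)
          = ((-1) ^ S.card * (-1) ^ S.card) * (A * B) from fun A B => by ring, ← mul_pow]
      norm_num
    rw [hco2, map_mul, map_pow, Valuation.map_neg, map_one, one_pow, one_mul]
    rw [show hbar.coeff (N - S.card) = emb (h.coeff (N - S.card)) from by rw [hhatdef, coeff_map]]
    exact va _
  have hesymm : hbar.roots.esymm S.card = ∑ T ∈ Finset.powersetCard S.card RF, ∏ x ∈ T, x := by
    have h1 := Finset.esymm_map_val (fun x => x) RF S.card
    rw [Multiset.map_id'] at h1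
    exact h1
  have one_lt_prod : ∀ (s : Finset (AlgebraicClosure ℚ_[p])), s.Nonempty → (∀ x ∈ s, 1 < v x) →
      1 < ∏ x ∈ s, v x := by
    intro s
    induction s using Finset.induction_on with
    | empty => intro hne _; exact absurd hne (by simp)
    | @insert a' s' ha' ih =>
      intro _ hlt
      rw [Finset.prod_insert ha']
      rcases s'.eq_empty_or_nonempty with rfl | hs
      · simpa using hlt a' (Finset.mem_insert_self a' _)
      · exact lt_of_lt_of_le (hlt a' (Finset.mem_insert_self a' s'))
          (le_mul_of_one_le_right' (ih hs (fun x hx => hlt x (Finset.mem_insert_of_mem hx))).le)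
  have hstrict : ∀ T ∈ (Finset.powersetCard S.card RF).erase S,
      v (cbar * ∏ x ∈ T, x) < v (cbar * ∏ x ∈ S, x) := by
    intro T hT
    obtain ⟨hTS, hTP⟩ := Finset.mem_erase.mp hT
    obtain ⟨hTsub, hTcard⟩ := Finset.mem_powersetCard.mp hTP
    have hSTne : (S \ T).Nonempty := by
      rw [Finset.sdiff_nonempty]
      intro hsub
      exact hTS (Finset.eq_of_subset_of_card_le hsub (le_of_eq hTcard)).symm
    have h1 : (∏ x ∈ T \ S, v x) ≤ 1 := Finset.prod_le_one' (fun x hx => by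
      obtain ⟨hxT, hxS⟩ := Finset.mem_sdiff.mp hx
      by_contra hgt
      push_neg at hgt
      exact hxS (Finset.mem_filter.mpr ⟨hTsub hxT, hgt⟩))
    have h2 : (1 : O.ValueGroup) < ∏ x ∈ S \ T, v x :=
      one_lt_prod _ hSTne (fun x hx => (Finset.mem_filter.mp (Finset.mem_sdiff.mp hx).1).2)
    have hTeq : ∏ x ∈ T, v x = (∏ x ∈ T \ S, v x) * ∏ x ∈ T ∩ S, v x := by
      rw [← Finset.sdiff_inter_self_left T S, Finset.prod_sdiff Finset.inter_subset_left]
    have hSeq : ∏ x ∈ S, v x = (∏ x ∈ S \ T, v x) * ∏ x ∈ S ∩ T, v x := by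
      rw [← Finset.sdiff_inter_self_left S T, Finset.prod_sdiff Finset.inter_subset_left]
    have hprodlt : ∏ x ∈ T, v x < ∏ x ∈ S, v x := by
      have hne0 : (∏ x ∈ S ∩ T, v x) ≠ 0 := by
        rw [Finset.prod_ne_zero_iff]
        exact fun x hx => hS0 x (Finset.mem_of_mem_inter_left hx)
      calc ∏ x ∈ T, v x = (∏ x ∈ T \ S, v x) * ∏ x ∈ T ∩ S, v x := hTeq
        _ ≤ 1 * ∏ x ∈ T ∩ S, v x := mul_le_mul_left h1 _
        _ = ∏ x ∈ S ∩ T, v x := by rw [one_mul, Finset.inter_comm]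
        _ < (∏ x ∈ S \ T, v x) * ∏ x ∈ S ∩ T, v x := by
            have hh := mul_lt_mul_of_pos_left h2 (zero_lt_iff.mpr hne0)
            rw [mul_one] at hh
            rw [mul_comm]
            exact hh
        _ = ∏ x ∈ S, v x := hSeq.symm
    rw [map_mul, map_mul, map_prod, map_prod]
    exact mul_lt_mul_of_pos_left hprodlt (zero_lt_iff.mpr ((Valuation.ne_zero_iff v).mpr hc0))
  have hU0 : cbar * ∏ x ∈ S, x ≠ 0 := by
    apply mul_ne_zero hc0
    rw [Finset.prod_ne_zero_iff]
    intro x hx h0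
    exact hS0 x hx (by rw [h0, map_zero])
  have hUv0 : v (cbar * ∏ x ∈ S, x) ≠ 0 := (Valuation.ne_zero_iff v).mpr hU0
  have hUle : v (cbar * ∏ x ∈ S, x) ≤ 1 := by
    have hsum : cbar * hbar.roots.esymm S.card
        = cbar * ∏ x ∈ S, x + ∑ T ∈ (Finset.powersetCard S.card RF).erase S, (cbar * ∏ x ∈ T, x) := by
      rw [hesymm, Finset.mul_sum, ← Finset.add_sum_erase _ _ hSmem]
    have hUeq : cbar * ∏ x ∈ S, x = cbar * hbar.roots.esymm S.card
        - ∑ T ∈ (Finset.powersetCard S.card RF).erase S, (cbar * ∏ x ∈ T, x) := by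
      rw [hsum]; ring
    have hsublt : v (∑ T ∈ (Finset.powersetCard S.card RF).erase S, (cbar * ∏ x ∈ T, x))
        < v (cbar * ∏ x ∈ S, x) := Valuation.map_sum_lt v hUv0 hstrict
    have hmax := Valuation.map_sub v (cbar * hbar.roots.esymm S.card)
      (∑ T ∈ (Finset.powersetCard S.card RF).erase S, (cbar * ∏ x ∈ T, x))
    rw [← hUeq] at hmax
    rcases le_max_iff.mp hmax with h' | h'
    · exact h'.trans hcoeffv
    · exact absurd (h'.trans_lt hsublt) (lt_irrefl _)
  have hGauss : v cbar * ∏ x ∈ RF, W x ≤ 1 := by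
    have hWprod : ∏ x ∈ RF, W x = ∏ x ∈ S, v x := by
      rw [hSdef, Finset.prod_filter]
      refine Finset.prod_congr rfl fun x _ => ?_
      rw [hWdef]
      by_cases h1 : 1 < v x
      · rw [if_pos h1]; exact max_eq_left h1.le
      · rw [if_neg h1]; exact max_eq_right (not_lt.mp h1)
    rw [hWprod]
    calc v cbar * ∏ x ∈ S, v x = v (cbar * ∏ x ∈ S, x) := by rw [map_mul, map_prod]
    _ ≤ 1 := hUle
  have hWe : ∀ x : AlgebraicClosure ℚ_[p], v (hbar.derivative.eval x) ≤ W x ^ (N - 1) := by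
    intro x
    have hdlt : (hbar.derivative).natDegree < N := by
      have hd := Polynomial.natDegree_derivative_lt (p := hbar) (by rw [hdeg]; omega)
      rw [hdeg] at hd
      exact hd
    rw [Polynomial.eval_eq_sum_range' hdlt x]
    apply Valuation.map_sum_le
    intro u hu
    rw [Finset.mem_range] at hu
    rw [map_mul, map_pow]
    have h1 : v (hbar.derivative.coeff u) ≤ 1 := by
      rw [show hbar.derivative.coeff u = emb (h.derivative.coeff u) from by
        rw [hhatdef, derivative_map, coeff_map]]
      exact va _
    have h2 : v x ^ u ≤ W x ^ (N - 1) :=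
      le_trans (pow_le_pow_left' (le_max_left _ _) u) (pow_le_pow_right' (hW1 x) (by omega))
    calc v (hbar.derivative.coeff u) * v x ^ u ≤ 1 * (W x ^ (N - 1)) := mul_le_mul' h1 h2
    _ = _ := one_mul _
  set Q : AlgebraicClosure ℚ_[p] :=
    cbar ^ (N - 1) * ∏ x ∈ RF.erase (emb a), hbar.derivative.eval x with hQdef
  have hQle : v Q ≤ 1 := by
    rw [hQdef, map_mul, map_pow, map_prod]
    calc v cbar ^ (N - 1) * ∏ x ∈ RF.erase (emb a), v (hbar.derivative.eval x)
        ≤ v cbar ^ (N - 1) * ∏ x ∈ RF.erase (emb a), W x ^ (N - 1) :=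
          mul_le_mul_right (Finset.prod_le_prod' fun x _ => hWe x) _
      _ = (v cbar * ∏ x ∈ RF.erase (emb a), W x) ^ (N - 1) := by
          rw [mul_pow, Finset.prod_pow]
      _ ≤ (v cbar * ∏ x ∈ RF, W x) ^ (N - 1) := by
          apply pow_le_pow_left'
          apply mul_le_mul_right
          calc ∏ x ∈ RF.erase (emb a), W x
              ≤ W (emb a) * ∏ x ∈ RF.erase (emb a), W x := le_mul_of_one_le_left' (hW1 _)
            _ = ∏ x ∈ RF, W x := Finset.mul_prod_erase RF W haKRF
      _ ≤ 1 ^ (N - 1) := pow_le_pow_left' hGauss _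
      _ = 1 := one_pow _
  have hprodQ : ∏ x ∈ RF.erase (emb a), hbar.derivative.eval x
      = cbar ^ (N - 1) * ∏ x ∈ RF.erase (emb a), (∏ y ∈ RF.erase x, (x - y)) := by
    rw [Finset.prod_congr rfl (fun x hx => hder x (Finset.mem_of_mem_erase hx))]
    rw [Finset.prod_mul_distrib, Finset.prod_const, Finset.card_erase_of_mem haKRF, hRFcard]
  have hDfact : emb D = (-1) ^ T₁.card * (emb (h.derivative.eval a) * Q) := by
    rw [hD, hdisc, s6, s7, s8, ← Finset.mul_prod_erase RF _ haKRF, hθemb, hQdef, hprodQ]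
    rw [show 2 * N - 1 = 1 + (N - 1) + (N - 1) from by omega, pow_add, pow_add, pow_one]
    ring
  have hvD : v (emb D) ≤ v (emb (h.derivative.eval a)) := by
    rw [hDfact, map_mul, map_mul, map_pow, Valuation.map_neg, map_one, one_pow, one_mul]
    exact mul_le_of_le_one_right' hQle
  have hθ0 : h.derivative.eval a ≠ 0 := by
    intro h0
    apply hD0
    apply embInj
    rw [map_zero, hDfact, h0, map_zero, zero_mul, mul_zero]
  have hvp : v (emb (p : ℤ_[p])) < 1 := by
    have hnu : ¬ IsUnit ((p : ℤ_[p])) := by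
      rw [PadicInt.isUnit_iff]
      have hlt : ‖(p : ℤ_[p])‖ < 1 := by
        rw [PadicInt.norm_p]
        have hp1 : (1:ℝ) < (p:ℝ) := by exact_mod_cast (Fact.out : p.Prime).one_lt
        rw [inv_lt_one_iff₀]
        right; exact hp1
      intro h1; rw [h1] at hlt; exact absurd hlt (lt_irrefl _)
    have hunit : ¬ IsUnit ((⟨emb (p : ℤ_[p]), hOmem _⟩ : O)) := by
      intro hu
      exact hnu (hOloc.map_nonunit _ hu)
    have hmem : ((⟨emb (p : ℤ_[p]), hOmem _⟩ : O)) ∈ IsLocalRing.maximalIdeal O :=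
      (IsLocalRing.mem_maximalIdeal _).mpr hunit
    exact (O.valuation_lt_one_iff _).mp hmem
  -- final norm conversion
  have hfinal : ∀ x y : ℤ_[p], y ≠ 0 → v (emb x) ≤ v (emb y) → ‖x‖ ≤ ‖y‖ := by
    intro x y hy0 hvxy
    have hy0' : (y : ℚ_[p]) ≠ 0 := fun hc => hy0 (Subtype.coe_injective hc)
    set q : ℚ_[p] := (x : ℚ_[p]) / (y : ℚ_[p]) with hqdef
    have hembq : algebraMap ℚ_[p] (AlgebraicClosure ℚ_[p]) q = emb x / emb y := by
      rw [hqdef, map_div₀]; rfl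
    have hvy0 : v (emb y) ≠ 0 := by
      rw [Valuation.ne_zero_iff]
      intro hc
      exact hy0 (embInj (by rw [hc, map_zero]))
    have hvq : v (algebraMap ℚ_[p] (AlgebraicClosure ℚ_[p]) q) ≤ 1 := by
      rw [hembq, map_div₀]
      rw [div_le_one₀ (zero_lt_iff.mpr hvy0)]
      exact hvxy
    have hnq : ‖q‖ ≤ 1 := by
      by_contra hgt
      push_neg at hgt
      have hq0 : q ≠ 0 := by
        intro h0; rw [h0, norm_zero] at hgt; linarith
      have hinv : ‖q⁻¹‖ < 1 := by
        rw [norm_inv]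
        exact inv_lt_one_of_one_lt₀ hgt
      set z : ℤ_[p] := ⟨q⁻¹, hinv.le⟩ with hzdef
      have hznorm : ‖z‖ < 1 := hinv
      obtain ⟨w, hw⟩ := (PadicInt.norm_lt_one_iff_dvd z).mp hznorm
      have hcoe : q⁻¹ = ((p : ℤ_[p]) : ℚ_[p]) * ((w : ℤ_[p]) : ℚ_[p]) := by
        have h3 : ((z : ℤ_[p]) : ℚ_[p]) = (((p : ℤ_[p]) * w : ℤ_[p]) : ℚ_[p]) := congrArg _ hw
        rw [PadicInt.coe_mul] at h3
        exact h3
      have h1 : v (algebraMap ℚ_[p] (AlgebraicClosure ℚ_[p]) q)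
          * v (algebraMap ℚ_[p] (AlgebraicClosure ℚ_[p]) q⁻¹) = 1 := by
        rw [← map_mul, ← map_mul, mul_inv_cancel₀ hq0, map_one, map_one]
      have h2 : v (algebraMap ℚ_[p] (AlgebraicClosure ℚ_[p]) q⁻¹) < 1 := by
        rw [hcoe, map_mul, map_mul]
        have e1 : algebraMap ℚ_[p] (AlgebraicClosure ℚ_[p]) ((p : ℤ_[p]) : ℚ_[p]) = emb (p : ℤ_[p]) := rfl
        have e2 : algebraMap ℚ_[p] (AlgebraicClosure ℚ_[p]) ((w : ℤ_[p]) : ℚ_[p]) = emb w := rfl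
        rw [e1, e2]
        calc v (emb (p : ℤ_[p])) * v (emb w) ≤ v (emb (p : ℤ_[p])) * 1 :=
              mul_le_mul_right (va w) _
        _ = v (emb (p : ℤ_[p])) := mul_one _
        _ < 1 := hvp
      have : (1 : O.ValueGroup) < 1 := by
        calc (1 : O.ValueGroup)
            = v (algebraMap ℚ_[p] (AlgebraicClosure ℚ_[p]) q)
            * v (algebraMap ℚ_[p] (AlgebraicClosure ℚ_[p]) q⁻¹) := h1.symm
          _ ≤ 1 * v (algebraMap ℚ_[p] (AlgebraicClosure ℚ_[p]) q⁻¹) := mul_le_mul_left hvq _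
          _ = v (algebraMap ℚ_[p] (AlgebraicClosure ℚ_[p]) q⁻¹) := one_mul _
          _ < 1 := h2
      exact absurd this (lt_irrefl _)
    have hfin2 : ‖(x : ℚ_[p])‖ ≤ ‖(y : ℚ_[p])‖ := by
      have hxq : (x : ℚ_[p]) = q * (y : ℚ_[p]) := by
        rw [hqdef]; field_simp
      rw [hxq, norm_mul]
      exact mul_le_of_le_one_left (norm_nonneg _) hnq
    rw [PadicInt.norm_def, PadicInt.norm_def]
    exact hfin2
  exact hfinal D (h.derivative.eval a) hθ0 hvD



end Aux

/-- Perturbing a root: let `k > d(Δ+1)` and let `ᾱ` be a root of `f mod p^k` with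
`l = v_p(α i - ᾱ) > Δ + 1` for some `i`.  Then every `β̄ ≡ ᾱ mod p^l` is also a
root of `f mod p^k`. -/
theorem stmt8 (p : ℕ) [Fact p.Prime] (f : Polynomial ℤ_[p]) (d : ℕ) (hd : d = f.natDegree)
    (n m : ℕ) (α : Fin n → ℤ_[p]) (e : Fin n → ℕ) (he : ∀ i, 1 ≤ e i)
    (hα : Function.Injective α)
    (g : Fin m → Polynomial ℤ_[p]) (t : Fin m → ℕ) (ht : ∀ j, 1 ≤ t j)
    (hg_irr : ∀ j, Irreducible (g j))
    (hg_noroot : ∀ j (x : ℤ_[p]), (g j).eval x ≠ 0)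
    (hg_coprime : ∀ j jQ, j ≠ jQ → ¬ Associated (g j) (g jQ))
    (hfact : f = (∏ i, (X - C (α i)) ^ e i) * ∏ j, g j ^ t j)
    (D : ℤ_[p]) (hD : padicEmb p D = padicDisc p ((∏ i, (X - C (α i))) * ∏ j, g j))
    (hD0 : D ≠ 0) (Δ : ℕ) (hΔ : (Δ : ℤ) = D.valuation)
    (k : ℕ) (hk : d * (Δ + 1) < k)
    (ᾱ : ℤ_[p]) (hroot : (p : ℤ_[p]) ^ k ∣ f.eval ᾱ)
    (i : Fin n) (l : ℕ) (hl : ‖α i - ᾱ‖ = (p : ℝ) ^ (-(l : ℤ))) (hlΔ : Δ + 1 < l) :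
    ∀ β : ℤ_[p], (p : ℤ_[p]) ^ l ∣ (β - ᾱ) → (p : ℤ_[p]) ^ k ∣ f.eval β := by
  classical
  intro β hβ
  have hp1 : (1:ℝ) < (p:ℝ) := by exact_mod_cast (Fact.out : p.Prime).one_lt
  set h : Polynomial ℤ_[p] := (∏ i, (X - C (α i))) * ∏ j, g j with hh
  have hXsub0 : (∏ i', (X - C (α i')) : Polynomial ℤ_[p]) ≠ 0 :=
    Finset.prod_ne_zero_iff.mpr fun j _ => (monic_X_sub_C (α j)).ne_zero
  have hg0 : (∏ j, g j : Polynomial ℤ_[p]) ≠ 0 :=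
    Finset.prod_ne_zero_iff.mpr fun j _ => (hg_irr j).ne_zero
  have hh0 : h ≠ 0 := mul_ne_zero hXsub0 hg0
  have ha : h.eval (α i) = 0 := by
    rw [hh, eval_mul, eval_prod]
    rw [Finset.prod_eq_zero (Finset.mem_univ i) (by simp), zero_mul]
  -- the derivative value
  set θ : ℤ_[p] := h.derivative.eval (α i) with hθ
  have key : ‖D‖ ≤ ‖θ‖ := norm_disc_le_norm_deriv h hh0 (α i) ha D hD hD0
  -- compute θ as a product
  have hsplit : h = (X - C (α i)) * ((∏ j ∈ Finset.univ.erase i, (X - C (α j))) * ∏ j, g j) := by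
    rw [hh, ← Finset.mul_prod_erase Finset.univ _ (Finset.mem_univ i), mul_assoc]
  have hθval : θ = (∏ j ∈ Finset.univ.erase i, (α i - α j)) * ∏ j, (g j).eval (α i) := by
    rw [hθ, hsplit, derivative_mul, derivative_X_sub_C]
    simp [eval_prod]
  -- each factor of θ has norm ≥ ‖D‖
  have hDnorm : ‖D‖ = (p:ℝ) ^ (-(Δ:ℤ)) := by
    rw [PadicInt.norm_eq_zpow_neg_valuation hD0, hΔ]
  have hfac_ge : ∀ x : ℤ_[p], x ∣ θ → ‖D‖ ≤ ‖x‖ := fun x hx => key.trans (norm_le_of_dvd hx)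
  have hαfac : ∀ j, j ≠ i → (p:ℝ) ^ (-(Δ:ℤ)) ≤ ‖α i - α j‖ := by
    intro j hj
    rw [← hDnorm]
    refine hfac_ge _ ?_
    rw [hθval]
    exact Dvd.dvd.mul_right (Finset.dvd_prod_of_mem _ (Finset.mem_erase.mpr ⟨hj, Finset.mem_univ j⟩)) _
  have hgfac : ∀ j, (p:ℝ) ^ (-(Δ:ℤ)) ≤ ‖(g j).eval (α i)‖ := by
    intro j
    rw [← hDnorm]
    refine hfac_ge _ ?_
    rw [hθval]
    exact Dvd.dvd.mul_left (Finset.dvd_prod_of_mem _ (Finset.mem_univ j)) _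
  -- endgame
  set c : ℝ := (p:ℝ) ^ (-(Δ:ℤ)) with hc
  have hplr : (p:ℝ) ^ (-(l:ℤ)) < c := by
    rw [hc]
    apply zpow_lt_zpow_right₀ hp1
    omega
  have hpl : ‖α i - ᾱ‖ < c := by rw [hl]; exact hplr
  have hβᾱ : ‖β - ᾱ‖ ≤ (p:ℝ) ^ (-(l:ℤ)) :=
    (PadicInt.norm_le_pow_iff_mem_span_pow _ l).mpr (Ideal.mem_span_singleton.mpr hβ)
  have hβᾱc : ‖β - ᾱ‖ < c := hβᾱ.trans_lt hplr
  have hj1 : ∀ j, j ≠ i → ‖ᾱ - α j‖ = ‖α i - α j‖ := by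
    intro j hj
    have e : ᾱ - α j = (α i - α j) - (α i - ᾱ) := by ring
    rw [e, norm_sub_eq_left (lt_of_lt_of_le hpl (hαfac j hj))]
  have hj2 : ∀ j, j ≠ i → ‖β - α j‖ = ‖ᾱ - α j‖ := by
    intro j hj
    have e : β - α j = (ᾱ - α j) - (ᾱ - β) := by ring
    have hlt : ‖ᾱ - β‖ < ‖ᾱ - α j‖ := by
      rw [hj1 j hj, show ᾱ - β = -(β - ᾱ) by ring, norm_neg]
      exact lt_of_lt_of_le hβᾱc (hαfac j hj)
    rw [e, norm_sub_eq_left hlt]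
  have hpoly : ∀ (q : Polynomial ℤ_[p]) (x y : ℤ_[p]), ‖q.eval x - q.eval y‖ ≤ ‖x - y‖ :=
    fun q x y => norm_le_of_dvd (sub_dvd_eval_sub x y q)
  have hg1 : ∀ j, ‖(g j).eval ᾱ‖ = ‖(g j).eval (α i)‖ := by
    intro j
    have e : (g j).eval ᾱ = (g j).eval (α i) - ((g j).eval (α i) - (g j).eval ᾱ) := by ring
    rw [e, norm_sub_eq_left ?_]
    refine lt_of_le_of_lt ((hpoly (g j) (α i) ᾱ)) (lt_of_lt_of_le hpl (hgfac j))
  have hg2 : ∀ j, ‖(g j).eval β‖ = ‖(g j).eval ᾱ‖ := by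
    intro j
    have e : (g j).eval β = (g j).eval ᾱ - ((g j).eval ᾱ - (g j).eval β) := by ring
    have hlt : ‖(g j).eval ᾱ - (g j).eval β‖ < ‖(g j).eval ᾱ‖ := by
      rw [hg1 j]
      refine lt_of_le_of_lt ?_ (lt_of_lt_of_le hβᾱc (hgfac j))
      calc ‖(g j).eval ᾱ - (g j).eval β‖ ≤ ‖ᾱ - β‖ := hpoly _ _ _
      _ = ‖β - ᾱ‖ := by rw [show ᾱ - β = -(β - ᾱ) by ring, norm_neg]
    rw [e, norm_sub_eq_left hlt]
  have hi3 : ‖β - α i‖ ≤ ‖ᾱ - α i‖ := by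
    have e : β - α i = (β - ᾱ) + (ᾱ - α i) := by ring
    rw [e]
    refine le_trans (PadicInt.nonarchimedean _ _) (max_le ?_ le_rfl)
    calc ‖β - ᾱ‖ ≤ (p:ℝ) ^ (-(l:ℤ)) := hβᾱ
    _ = ‖α i - ᾱ‖ := hl.symm
    _ = ‖ᾱ - α i‖ := by rw [show α i - ᾱ = -(ᾱ - α i) by ring, norm_neg]
  have normF : ∀ x : ℤ_[p],
      ‖f.eval x‖ = (∏ j, ‖x - α j‖ ^ (e j)) * ∏ j, ‖(g j).eval x‖ ^ (t j) := by
    intro x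
    show padicNormHom (f.eval x) = _
    rw [hfact, eval_mul, map_mul, eval_prod, eval_prod, map_prod, map_prod]
    congr 1
    · refine Finset.prod_congr rfl fun j _ => ?_
      rw [eval_pow, map_pow]
      simp [padicNormHom]
    · refine Finset.prod_congr rfl fun j _ => ?_
      rw [eval_pow, map_pow]
      simp [padicNormHom]
  have cmp : ‖f.eval β‖ ≤ ‖f.eval ᾱ‖ := by
    rw [normF β, normF ᾱ]
    have h1 : (∏ j, ‖β - α j‖ ^ e j) ≤ ∏ j, ‖ᾱ - α j‖ ^ e j := by
      apply Finset.prod_le_prod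
      · intros; positivity
      · intro j _
        by_cases hji : j = i
        · subst hji; exact pow_le_pow_left₀ (norm_nonneg _) hi3 _
        · rw [hj2 j hji]
    have h2 : (∏ j, ‖(g j).eval β‖ ^ t j) = ∏ j, ‖(g j).eval ᾱ‖ ^ t j :=
      Finset.prod_congr rfl fun j _ => by rw [hg2 j]
    rw [h2]
    exact mul_le_mul_of_nonneg_right h1 (Finset.prod_nonneg fun j _ => by positivity)
  have hroot' : ‖f.eval ᾱ‖ ≤ (p:ℝ) ^ (-(k:ℤ)) :=
    (PadicInt.norm_le_pow_iff_mem_span_pow _ k).mpr (Ideal.mem_span_singleton.mpr hroot)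
  exact Ideal.mem_span_singleton.mp
    ((PadicInt.norm_le_pow_iff_mem_span_pow _ k).mp (cmp.trans hroot'))
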